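/- arXiv:2103.05474 — 3 statements merged into one kernel-verified Lean document; each statement's English description precedes it below -/
import Mathlib

section
/- Let Z be a hidden Markov model whose transition matrix ℙ = (p_{ij}) is irreducible and has at least one row consisting entirely of strictly positive entries. Then assumptions A1 and A2 hold. -/
/-!
If the letters `x_2, …, x_r` of an observation string have emission-support profiles
`C_1, …, C_{r-1}`, then `p_{ij}(x_{1:r}) > 0` iff `j` is reached from `i` by a path of positive
`ℙ`-transitions whose `k`-th step lands in `C_k`. So it suffices to find a word of clusters after
which the reachable set of every state is either empty or one fixed cluster `C₀`: then
`Y⁺ = A × C₀`, with `A` the states whose reachable set is `C₀`, on the set `E` of strings with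
these profiles, and the sections of `E` have positive measure because every letter is a cluster. Since row `i₀` of `ℙ` is positive, the letter `C₀`
maps every set containing `i₀` onto `C₀`, and irreducibility steers any nonempty set to `i₀`;
this collapses the states one at a time.

For A2, the `n`-step kernel from `(x, i)` has density `ℙⁿ(i, j) f_j(x')` with respect to
`μ × count`, so `ψ(dx', j) = f_j(x') μ(dx')` is an irreducibility measure dominating all of them,
hence maximal.
-/

open MeasureTheory ProbabilityTheory ENNReal

namespace PMMPaper

/-! ### General Markov chain notions (general state space) -/

section Kernels

variable {S : Type*} [MeasurableSpace S]

open Classical in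
/-- `kpow κ k` is the `k`-step transition kernel of a Markov chain with one-step kernel `κ`. -/
noncomputable def kpow (κ : Kernel S S) : ℕ → Kernel S S
  | 0 => Kernel.id
  | n + 1 => kpow κ n ∘ₖ κ

/-- `φ` is an irreducibility measure for the chain with kernel `κ`:
`φ(A) > 0` implies that from every point `z` some `k`-step transition reaches `A`
with positive probability. -/
def IsIrreducibilityMeasure (κ : Kernel S S) (φ : Measure S) : Prop :=
  ∀ A : Set S, MeasurableSet A → 0 < φ A → ∀ z : S, ∃ k : ℕ, 1 ≤ k ∧ 0 < kpow κ k z A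

/-- `ψ` is a maximal irreducibility measure: a σ-finite irreducibility measure dominating
every other σ-finite irreducibility measure. -/
def IsMaxIrreducibilityMeasure (κ : Kernel S S) (ψ : Measure S) : Prop :=
  SigmaFinite ψ ∧ IsIrreducibilityMeasure κ ψ ∧
    ∀ φ : Measure S, SigmaFinite φ → IsIrreducibilityMeasure κ φ → φ ≪ ψ

/-- `Pz` is the family of laws (on the path space `ℕ → S`) of the Markov chain with
transition kernel `κ` started at the point `z`:  `Pz z` is a probability measure under which
the coordinate process starts at `z` and is Markov with kernel `κ`. -/
def IsMarkovFamily (κ : Kernel S S) (Pz : S → Measure (ℕ → S)) : Prop :=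
  (∀ z : S, IsProbabilityMeasure (Pz z)) ∧
  (∀ z : S, Pz z {ω | ω 0 = z} = 1) ∧
  ∀ (z : S) (n : ℕ) (g : S → ℝ≥0∞), Measurable g → ∀ C : Set (ℕ → S),
    MeasurableSet[⨆ i ∈ Set.Iic n, MeasurableSpace.comap (fun ω : ℕ → S => ω i) inferInstance] C →
    ∫⁻ ω in C, g (ω (n + 1)) ∂(Pz z) = ∫⁻ ω in C, ∫⁻ z', g z' ∂(κ (ω n)) ∂(Pz z)

/-- Harris recurrence property (relative to the measure `ψ`): every set charged by `ψ` is
visited infinitely often, almost surely, from every starting point. -/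
def HarrisProp (κ : Kernel S S) (Pz : S → Measure (ℕ → S)) (ψ : Measure S) : Prop :=
  ∀ A : Set S, MeasurableSet A → 0 < ψ A → ∀ z : S,
    Pz z {ω | ∀ N : ℕ, ∃ k : ℕ, N ≤ k ∧ ω k ∈ A} = 1

/-- `π` is an invariant measure for the kernel `κ`. -/
def IsInvariantMeasure (κ : Kernel S S) (π : Measure S) : Prop :=
  π.bind (fun z => κ z) = π

/-- The chain is positive: its transition kernel admits an invariant probability measure. -/
def IsPositive (κ : Kernel S S) : Prop :=
  ∃ π : Measure S, IsProbabilityMeasure π ∧ IsInvariantMeasure κ π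

/-- The process `Z` on `(Ω, P)` is a homogeneous Markov chain with transition kernel `κ`. -/
def IsMarkovChain {Ω : Type*} [MeasurableSpace Ω] (P : Measure Ω) (Z : ℕ → Ω → S)
    (κ : Kernel S S) : Prop :=
  (∀ k : ℕ, Measurable (Z k)) ∧
  ∀ (n : ℕ) (g : S → ℝ≥0∞), Measurable g → ∀ C : Set Ω,
    MeasurableSet[⨆ i ∈ Set.Iic n, MeasurableSpace.comap (Z i) inferInstance] C →
    ∫⁻ ω in C, g (Z (n + 1) ω) ∂P = ∫⁻ ω in C, ∫⁻ z', g z' ∂(κ (Z n ω)) ∂P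

/-- The process `Z : ℤ → Ω → S` on `(Ω, P)` is a (two-sided) homogeneous Markov chain
with transition kernel `κ`. -/
def IsMarkovChainZ {Ω : Type*} [MeasurableSpace Ω] (P : Measure Ω) (Z : ℤ → Ω → S)
    (κ : Kernel S S) : Prop :=
  (∀ k : ℤ, Measurable (Z k)) ∧
  ∀ (n : ℤ) (g : S → ℝ≥0∞), Measurable g → ∀ C : Set Ω,
    MeasurableSet[⨆ i ∈ Set.Iic n, MeasurableSpace.comap (Z i) inferInstance] C →
    ∫⁻ ω in C, g (Z (n + 1) ω) ∂P = ∫⁻ ω in C, ∫⁻ z', g z' ∂(κ (Z n ω)) ∂P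

/-- The reversed-time process of the two-sided chain `Z` is a Markov chain with kernel `κ'`. -/
def IsRevMarkovChainZ {Ω : Type*} [MeasurableSpace Ω] (P : Measure Ω) (Z : ℤ → Ω → S)
    (κ' : Kernel S S) : Prop :=
  ∀ (n : ℤ) (g : S → ℝ≥0∞), Measurable g → ∀ C : Set Ω,
    MeasurableSet[⨆ i ∈ Set.Ici n, MeasurableSpace.comap (Z i) inferInstance] C →
    ∫⁻ ω in C, g (Z (n - 1) ω) ∂P = ∫⁻ ω in C, ∫⁻ z', g z' ∂(κ' (Z n ω)) ∂P

/-- The two-sided process `Z` is stationary: all finite-dimensional distributions are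
invariant under time shifts. -/
def IsStationaryZ {Ω : Type*} [MeasurableSpace Ω] (P : Measure Ω) (Z : ℤ → Ω → S) : Prop :=
  ∀ (k : ℤ) (n : ℕ),
    P.map (fun ω => fun i : Fin n => Z (k + (i : ℕ)) ω) =
      P.map (fun ω => fun i : Fin n => Z ((i : ℕ) : ℤ) ω)

/-- First-coordinate projection `A_(1)` of a set of finite strings. -/
def proj1 {α : Type*} {R : ℕ} (A : Set (Fin (R + 1) → α)) : Set α :=
  (fun x => x 0) '' A

/-- The section `A(a) = {x_{2:r} : (a, x_{2:r}) ∈ A}`. -/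
def secSet {α : Type*} {R : ℕ} (A : Set (Fin (R + 1) → α)) (a : α) : Set (Fin R → α) :=
  {xr | Fin.cons a xr ∈ A}

end Kernels

/-! ### Pairwise Markov models -/

variable {𝓧 : Type*} [MeasurableSpace 𝓧] {𝓨 : Type*} [Fintype 𝓨] [DecidableEq 𝓨]
  [MeasurableSpace 𝓨] [MeasurableSingletonClass 𝓨] [Nonempty 𝓨]
  {Ω : Type*} [MeasurableSpace Ω]

/-- `Z` is a pairwise Markov model on `(Ω, P)`: a homogeneous Markov chain on `𝓧 × 𝓨`
whose transition kernel `κ` has density `q(z'|z)` with respect to `μ × count`, and whose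
initial distribution has density `p0` with respect to `μ × count`. -/
def IsPMM (P : Measure Ω) (Z : ℕ → Ω → 𝓧 × 𝓨) (κ : Kernel (𝓧 × 𝓨) (𝓧 × 𝓨))
    (μ : Measure 𝓧) (q : 𝓧 × 𝓨 → 𝓧 × 𝓨 → ℝ≥0∞) (p0 : 𝓧 × 𝓨 → ℝ≥0∞) : Prop :=
  IsProbabilityMeasure P ∧ IsMarkovChain P Z κ ∧ SigmaFinite μ ∧
  Measurable (Function.uncurry q) ∧ Measurable p0 ∧
  (∀ z : 𝓧 × 𝓨, (κ z : Measure (𝓧 × 𝓨)) =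
      (μ.prod Measure.count).withDensity (fun z' => q z' z)) ∧
  P.map (Z 0) = (μ.prod Measure.count).withDensity p0

/-- Two-sided version of `IsPMM`. -/
def IsPMMZ (P : Measure Ω) (Z : ℤ → Ω → 𝓧 × 𝓨) (κ : Kernel (𝓧 × 𝓨) (𝓧 × 𝓨))
    (μ : Measure 𝓧) (q : 𝓧 × 𝓨 → 𝓧 × 𝓨 → ℝ≥0∞) (p0 : 𝓧 × 𝓨 → ℝ≥0∞) : Prop :=
  IsProbabilityMeasure P ∧ IsMarkovChainZ P Z κ ∧ SigmaFinite μ ∧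
  Measurable (Function.uncurry q) ∧ Measurable p0 ∧
  (∀ z : 𝓧 × 𝓨, (κ z : Measure (𝓧 × 𝓨)) =
      (μ.prod Measure.count).withDensity (fun z' => q z' z)) ∧
  P.map (Z 0) = (μ.prod Measure.count).withDensity p0

/-- `pijD q x i j` is the conditional density
`p_{ij}(x_{1:r}) = p(x_{2:r}, y_r = j | x_1, y_1 = i)` (a string `x` of length `R+1`). -/
noncomputable def pijD (q : 𝓧 × 𝓨 → 𝓧 × 𝓨 → ℝ≥0∞) {R : ℕ} (x : Fin (R + 1) → 𝓧)
    (i j : 𝓨) : ℝ≥0∞ :=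
  ∑ y : Fin (R + 1) → 𝓨,
    (if y 0 = i ∧ y (Fin.last R) = j then
      ∏ k : Fin R, q (x k.succ, y k.succ) (x k.castSucc, y k.castSucc) else 0)

/-- `pmidD q x i t j` is the density `p(y_{t+1} = j, x_{2:r} | x_1, y_1 = i)`. -/
noncomputable def pmidD (q : 𝓧 × 𝓨 → 𝓧 × 𝓨 → ℝ≥0∞) {R : ℕ} (x : Fin (R + 1) → 𝓧)
    (i : 𝓨) (t : Fin (R + 1)) (j : 𝓨) : ℝ≥0∞ :=
  ∑ y : Fin (R + 1) → 𝓨,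
    (if y 0 = i ∧ y t = j then
      ∏ k : Fin R, q (x k.succ, y k.succ) (x k.castSucc, y k.castSucc) else 0)

/-- `pxD q x i = p(x_{2:r} | x_1, y_1 = i)`. -/
noncomputable def pxD (q : 𝓧 × 𝓨 → 𝓧 × 𝓨 → ℝ≥0∞) {R : ℕ} (x : Fin (R + 1) → 𝓧)
    (i : 𝓨) : ℝ≥0∞ :=
  ∑ j : 𝓨, pijD q x i j

/-- The set `Y⁺(x_{1:r}) = {(i,j) : p_{ij}(x_{1:r}) > 0}`. -/
def Yplus (q : 𝓧 × 𝓨 → 𝓧 × 𝓨 → ℝ≥0∞) {R : ℕ} (x : Fin (R + 1) → 𝓧) : Set (𝓨 × 𝓨) :=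
  {p : 𝓨 × 𝓨 | 0 < pijD q x p.1 p.2}

/-- Joint density `p(x_{1:r}, y_{1:r})` of `Z_{1:r}`, built from the initial density `p0`
and the transition density `q`. -/
noncomputable def jointD (p0 : 𝓧 × 𝓨 → ℝ≥0∞) (q : 𝓧 × 𝓨 → 𝓧 × 𝓨 → ℝ≥0∞) {R : ℕ}
    (x : Fin (R + 1) → 𝓧) (y : Fin (R + 1) → 𝓨) : ℝ≥0∞ :=
  p0 (x 0, y 0) * ∏ k : Fin R, q (x k.succ, y k.succ) (x k.castSucc, y k.castSucc)

/-- Density `p(x_{1:r})` of the observations `X_{1:r}`. -/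
noncomputable def pXD (p0 : 𝓧 × 𝓨 → ℝ≥0∞) (q : 𝓧 × 𝓨 → 𝓧 × 𝓨 → ℝ≥0∞) {R : ℕ}
    (x : Fin (R + 1) → 𝓧) : ℝ≥0∞ :=
  ∑ y : Fin (R + 1) → 𝓨, jointD p0 q x y

/-- The set `Y*(x_{1:r}) = {(y_1, y_r) : ∃ y_{2:r-1}, p(x_{1:r}, y_{1:r}) > 0}`. -/
def Ystar (p0 : 𝓧 × 𝓨 → ℝ≥0∞) (q : 𝓧 × 𝓨 → 𝓧 × 𝓨 → ℝ≥0∞) {R : ℕ}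
    (x : Fin (R + 1) → 𝓧) : Set (𝓨 × 𝓨) :=
  {p : 𝓨 × 𝓨 | ∃ y : Fin (R + 1) → 𝓨,
    y 0 = p.1 ∧ y (Fin.last R) = p.2 ∧ 0 < jointD p0 q x y}

/-- Assumption **A1**: there is `r = R + 1 > 1` and a set `E ⊆ 𝓧^r` on which
`Y⁺(x_{1:r}) = Y⁺` is constant, nonempty, and a product set. -/
def Assumption1 (q : 𝓧 × 𝓨 → 𝓧 × 𝓨 → ℝ≥0∞) {R : ℕ} (E : Set (Fin (R + 1) → 𝓧))
    (Yp : Set (𝓨 × 𝓨)) : Prop :=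
  1 ≤ R ∧ Yp.Nonempty ∧ (∀ x ∈ E, Yplus q x = Yp) ∧
    Yp = (Prod.fst '' Yp) ×ˢ (Prod.snd '' Yp)

/-- Assumption **A2**: `ψ` is a maximal irreducibility measure for the chain,
`ψ(E_(1) × Y⁺_(1)) > 0` and `μ^{r-1}(E(x₁)) > 0` for all `x₁ ∈ E_(1)`. -/
def Assumption2 (κ : Kernel (𝓧 × 𝓨) (𝓧 × 𝓨)) (ψ : Measure (𝓧 × 𝓨)) (μ : Measure 𝓧)
    {R : ℕ} (E : Set (Fin (R + 1) → 𝓧)) (Yp : Set (𝓨 × 𝓨)) : Prop :=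
  IsMaxIrreducibilityMeasure κ ψ ∧
  0 < ψ (proj1 E ×ˢ (Prod.fst '' Yp)) ∧
  ∀ x₁ ∈ proj1 E, 0 < (Measure.pi fun _ : Fin R => μ) (secSet E x₁)

/-- Assumption **A1'** (stationary case): `Y*(x_{1:r}) = Y*` is constant on `E`,
nonempty and a product set. -/
def Assumption1' (p0 : 𝓧 × 𝓨 → ℝ≥0∞) (q : 𝓧 × 𝓨 → 𝓧 × 𝓨 → ℝ≥0∞) {R : ℕ}
    (E : Set (Fin (R + 1) → 𝓧)) (Ys : Set (𝓨 × 𝓨)) : Prop :=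
  1 ≤ R ∧ Ys.Nonempty ∧ (∀ x ∈ E, Ystar p0 q x = Ys) ∧
    Ys = (Prod.fst '' Ys) ×ˢ (Prod.snd '' Ys)

/-- Assumption **A2'**: `μ^r(E) > 0`. -/
def Assumption2' (μ : Measure 𝓧) {R : ℕ} (E : Set (Fin (R + 1) → 𝓧)) : Prop :=
  0 < (Measure.pi fun _ : Fin (R + 1) => μ) E

/-! ### Smoothing distributions -/

/-- The σ-algebra `σ(X_{l:n})` generated by the observations with indices in `[l, n]`. -/
noncomputable def obsSigma (Z : ℕ → Ω → 𝓧 × 𝓨) (l n : ℕ) : MeasurableSpace Ω :=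
  ⨆ i ∈ Set.Icc l n, MeasurableSpace.comap (fun ω => (Z i ω).1) inferInstance

/-- The σ-algebra `σ(X_{s:∞})` generated by the observations with indices `≥ s`. -/
noncomputable def obsSigmaFrom (Z : ℕ → Ω → 𝓧 × 𝓨) (s : ℕ) : MeasurableSpace Ω :=
  ⨆ i ∈ Set.Ici s, MeasurableSpace.comap (fun ω => (Z i ω).1) inferInstance

/-- The smoothing probability `ν^t_{l:n;m}(v) = P(Y_{t:t+m-1} = v | X_{l:n})`,
realized as a conditional expectation of an indicator. -/
noncomputable def smooth (P : Measure Ω) (Z : ℕ → Ω → 𝓧 × 𝓨) (t l n : ℕ) {m : ℕ}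
    (v : Fin m → 𝓨) : Ω → ℝ :=
  P[Set.indicator {ω | ∀ i : Fin m, (Z (t + (i : ℕ)) ω).2 = v i} (fun _ => (1 : ℝ)) |
    obsSigma Z l n]

/-- Total variation distance `‖ν^t_{l:n;m} − ν^t_{s:n;m}‖_TV`. -/
noncomputable def tvBlock (P : Measure Ω) (Z : ℕ → Ω → 𝓧 × 𝓨) (t l s n m : ℕ) (ω : Ω) : ℝ :=
  ∑ v : Fin m → 𝓨, |smooth P Z t l n v ω - smooth P Z t s n v ω|

/-- Two-sided version: the σ-algebra `σ(X_i ; i ∈ I)` for `I ⊆ ℤ`. -/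
noncomputable def obsSigmaZ (Z : ℤ → Ω → 𝓧 × 𝓨) (I : Set ℤ) : MeasurableSpace Ω :=
  ⨆ i ∈ I, MeasurableSpace.comap (fun ω => (Z i ω).1) inferInstance

/-- Two-sided smoothing probability `P(Y_{t:t+m-1} = v | X_i ; i ∈ I)`. -/
noncomputable def smoothZ (P : Measure Ω) (Z : ℤ → Ω → 𝓧 × 𝓨) (t : ℤ) (I : Set ℤ) {m : ℕ}
    (v : Fin m → 𝓨) : Ω → ℝ :=
  P[Set.indicator {ω | ∀ i : Fin m, (Z (t + (i : ℕ)) ω).2 = v i} (fun _ => (1 : ℝ)) |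
    obsSigmaZ Z I]

/-- Two-sided total variation distance between smoothing distributions with observation
index sets `I` and `J`. -/
noncomputable def tvBlockZ (P : Measure Ω) (Z : ℤ → Ω → 𝓧 × 𝓨) (t : ℤ) (I J : Set ℤ)
    (m : ℕ) (ω : Ω) : ℝ :=
  ∑ v : Fin m → 𝓨, |smoothZ P Z t I v ω - smoothZ P Z t J v ω|

/-! ### Counters, Doeblin matrices -/

/-- `κ_k(X_{s:t})`: the number of (almost non-overlapping) `E`-blocks of length `R+1`
in the observed string, counting from position `s + k` (paper's `κ_k`, `r' = R`). -/
noncomputable def kapCount (Z : ℕ → Ω → 𝓧 × 𝓨) {R : ℕ} (E : Set (Fin (R + 1) → 𝓧))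
    (s t kk : ℕ) (ω : Ω) : ℕ :=
  ∑ u ∈ Finset.range ((t - kk - s) / R),
    Set.indicator E (fun _ => 1) (fun i : Fin (R + 1) => (Z (u * R + s + kk + (i : ℕ)) ω).1)

/-- `κ̄(X_{s:t})`: the backward counter, counting `E`-blocks from position `t` backwards. -/
noncomputable def kapBar (Z : ℕ → Ω → 𝓧 × 𝓨) {R : ℕ} (E : Set (Fin (R + 1) → 𝓧))
    (s t : ℕ) (ω : Ω) : ℕ :=
  ∑ u ∈ Finset.range ((t - s) / R),
    Set.indicator E (fun _ => 1) (fun i : Fin (R + 1) => (Z (t - (u + 1) * R + (i : ℕ)) ω).1)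

open Classical in
/-- The segment `x_{a+1:b+1}` (0-based indices `a..b`) of a string of length `L+1`. -/
def segv {L : ℕ} (x : Fin (L + 1) → 𝓧) (a b : ℕ) (hab : a ≤ b) (hb : b ≤ L) :
    Fin (b - a + 1) → 𝓧 :=
  fun i => x ⟨a + (i : ℕ), by omega⟩

/-- Normalizing constant `c(x_{r:n}) = ∑_{j ∈ Y₂} p(x_{r+1:n} | x_r, y_r = j)`. -/
noncomputable def normC (q : 𝓧 × 𝓨 → 𝓧 × 𝓨 → ℝ≥0∞) (Y2 : Set 𝓨) {M : ℕ}
    (w : Fin (M + 1) → 𝓧) : ℝ≥0∞ :=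
  ∑ j : 𝓨, Set.indicator Y2 (fun j' => pxD q w j') j

/-- The probability vector `λ[x_{r:n}](j)`. -/
noncomputable def lamD (q : 𝓧 × 𝓨 → 𝓧 × 𝓨 → ℝ≥0∞) (Y2 : Set 𝓨) {M : ℕ}
    (w : Fin (M + 1) → 𝓧) (j : 𝓨) : ℝ≥0∞ :=
  Set.indicator Y2 (fun j' => pxD q w j') j / normC q Y2 w

/-- The matrix `U[x_{1:n}](i,j)`; a version of `P(Y_r = j | X_{1:n} = x_{1:n}, Y_1 = i)`. -/
noncomputable def UMat (q : 𝓧 × 𝓨 → 𝓧 × 𝓨 → ℝ≥0∞) (Y2 : Set 𝓨) {L R : ℕ} (hR : R ≤ L)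
    (x : Fin (L + 1) → 𝓧) (i j : 𝓨) : ℝ≥0∞ :=
  if 0 < pxD q x i then pmidD q x i ⟨R, by omega⟩ j / pxD q x i
  else lamD q Y2 (segv x R L hR (le_refl L)) j

/-! ### Total variation of measures, conditional laws of `Y_{t:∞}` -/

open Classical in
/-- Total variation distance between two measures (normalized as in the paper:
`‖P − Q‖_TV = 2 sup_A |P(A) − Q(A)|`). -/
noncomputable def tvDistM {W : Type*} [MeasurableSpace W] (ρ₁ ρ₂ : Measure W) : ℝ≥0∞ :=
  2 * ⨆ (A : Set W) (_ : MeasurableSet A), ((ρ₁ A - ρ₂ A) ⊔ (ρ₂ A - ρ₁ A))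

/-- The observation vector `X_{l:n}`. -/
def obsVec (Z : ℕ → Ω → 𝓧 × 𝓨) (l n : ℕ) (ω : Ω) : Fin (n + 1 - l) → 𝓧 :=
  fun i => (Z (l + (i : ℕ)) ω).1

/-- The tail signal process `Y_{t:∞}`. -/
def tailY (Z : ℕ → Ω → 𝓧 × 𝓨) (t : ℕ) (ω : Ω) : ℕ → 𝓨 :=
  fun k => (Z (t + k) ω).2

/-- The observation tail `X_{l:∞}`. -/
def obsTail (Z : ℕ → Ω → 𝓧 × 𝓨) (l : ℕ) (ω : Ω) : ℕ → 𝓧 :=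
  fun k => (Z (l + k) ω).1

/-- A regular version of the conditional distribution `P(Y_{t:∞} ∈ · | X_{l:n})`,
evaluated at `ω`. -/
noncomputable def condLawTail (P : Measure Ω) [IsFiniteMeasure P] (Z : ℕ → Ω → 𝓧 × 𝓨)
    (t l n : ℕ) (ω : Ω) : Measure (ℕ → 𝓨) :=
  condDistrib (tailY Z t) (obsVec Z l n) P (obsVec Z l n ω)

/-- A regular version of the conditional distribution `P(Y_{t:∞} ∈ · | X_{l:∞})`,
evaluated at `ω`. -/
noncomputable def condLawTailInf (P : Measure Ω) [IsFiniteMeasure P] (Z : ℕ → Ω → 𝓧 × 𝓨)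
    (t l : ℕ) (ω : Ω) : Measure (ℕ → 𝓨) :=
  condDistrib (tailY Z t) (obsTail Z l) P (obsTail Z l ω)

/-! ### Hidden Markov models and matrices -/

/-- Powers of a nonnegative matrix on `𝓨`. -/
noncomputable def matpow (p : 𝓨 → 𝓨 → ℝ≥0∞) : ℕ → 𝓨 → 𝓨 → ℝ≥0∞
  | 0 => fun i j => if i = j then 1 else 0
  | n + 1 => fun i j => ∑ k : 𝓨, matpow p n i k * p k j

/-- The sub-matrix `ℙ_C` of `p` with rows and columns restricted to `C` (and `0` outside). -/
noncomputable def subMat (p : 𝓨 → 𝓨 → ℝ≥0∞) (C : Set 𝓨) : 𝓨 → 𝓨 → ℝ≥0∞ :=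
  fun i j => Set.indicator (C ×ˢ C) (fun ij : 𝓨 × 𝓨 => p ij.1 ij.2) (i, j)

/-- Support `G_i = {x : f_i(x) > 0}` of the emission density `f_i`. -/
def emisSupp (f : 𝓨 → 𝓧 → ℝ≥0∞) (i : 𝓨) : Set 𝓧 :=
  {x | 0 < f i x}

/-- `C` is a cluster: `μ[(∩_{i∈C} G_i) \ (∪_{i∉C} G_i)] > 0`. -/
def IsCluster (μ : Measure 𝓧) (f : 𝓨 → 𝓧 → ℝ≥0∞) (C : Set 𝓨) : Prop :=
  0 < μ ((⋂ i ∈ C, emisSupp f i) \ (⋃ i ∈ Cᶜ, emisSupp f i))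

section Reachability

variable {ι : Type*}

def stepIn (p : ι → ι → ℝ≥0∞) (C S : Set ι) : Set ι :=
  {j | j ∈ C ∧ ∃ s ∈ S, 0 < p s j}

def runWord (p : ι → ι → ℝ≥0∞) (w : List (Set ι)) (S : Set ι) : Set ι :=
  w.foldl (fun S C => stepIn p C S) S

variable {p : ι → ι → ℝ≥0∞}

@[simp]
theorem runWord_nil (S : Set ι) : runWord p [] S = S := rfl

theorem runWord_cons (C : Set ι) (w : List (Set ι)) (S : Set ι) :
    runWord p (C :: w) S = runWord p w (stepIn p C S) := rfl

@[simp]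
theorem runWord_append (u v : List (Set ι)) (S : Set ι) :
    runWord p (u ++ v) S = runWord p v (runWord p u S) :=
  List.foldl_append ..

@[simp]
theorem runWord_singleton (C S : Set ι) : runWord p [C] S = stepIn p C S := rfl

theorem stepIn_subset (C S : Set ι) : stepIn p C S ⊆ C := fun _ h => h.1

theorem stepIn_eq_of_row_pos {i₀ : ι} (hrow : ∀ j, 0 < p i₀ j) (C : Set ι) {S : Set ι}
    (hS : i₀ ∈ S) : stepIn p C S = C :=
  (stepIn_subset C S).antisymm fun j hj => ⟨hj, i₀, hS, hrow j⟩

theorem runWord_mono (w : List (Set ι)) {S T : Set ι} (h : S ⊆ T) :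
    runWord p w S ⊆ runWord p w T := by
  induction w generalizing S T with
  | nil => exact h
  | cons C w ih => exact ih fun j ⟨hjC, s, hs, hsj⟩ => ⟨hjC, s, h hs, hsj⟩

@[simp]
theorem runWord_empty (w : List (Set ι)) : runWord p w ∅ = ∅ :=
  Set.subset_empty_iff.mp <| by
    induction w with
    | nil => rfl
    | cons C w ih => simpa [runWord_cons, stepIn] using ih

theorem mem_runWord_iff {w : List (Set ι)} {S : Set ι} {j : ι} :
    j ∈ runWord p w S ↔ ∃ y : Fin (w.length + 1) → ι, y 0 ∈ S ∧ y (Fin.last _) = j ∧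
      ∀ k : Fin w.length, 0 < p (y k.castSucc) (y k.succ) ∧ y k.succ ∈ w[k] := by
  induction w generalizing S with
  | nil => exact ⟨fun h => ⟨fun _ => j, h, rfl, nofun⟩, fun ⟨y, h0, hj, _⟩ => hj ▸ h0⟩
  | cons C w ih =>
    rw [runWord_cons, ih]
    constructor
    · rintro ⟨y, ⟨hy0, s, hs, hsy⟩, hj, hy⟩
      refine ⟨Fin.cons s y, hs, by simpa [← Fin.succ_last] using hj, Fin.cases ?_ fun k => ?_⟩
      · simpa using ⟨hsy, hy0⟩
      · simpa using hy k
    · rintro ⟨y, hy0, hj, hy⟩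
      exact ⟨Fin.tail y, ⟨(hy 0).2, y 0, hy0, (hy 0).1⟩,
        by simpa [Fin.tail, Fin.succ_last] using hj, fun k => hy k.succ⟩

end Reachability

section MatrixPowers

variable {ι : Type*} [Fintype ι] [DecidableEq ι] {p : ι → ι → ℝ≥0∞}

theorem matpow_eq_pow (p : ι → ι → ℝ≥0∞) (n : ℕ) : matpow p n = Matrix.of p ^ n := by
  induction n with
  | zero => funext i j; simp [matpow, Matrix.one_apply]
  | succ n ih => funext i j; simp [matpow, ih, pow_succ, Matrix.mul_apply]

theorem matpow_one (i j : ι) : matpow p 1 i j = p i j := by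
  simp [matpow_eq_pow]

theorem matpow_succ' (n : ℕ) (i j : ι) : matpow p (n + 1) i j = ∑ k, p i k * matpow p n k j := by
  simp [matpow_eq_pow, pow_succ', Matrix.mul_apply]

end MatrixPowers

section CollapsingWords

variable {ι : Type*} [Fintype ι] [DecidableEq ι] {p : ι → ι → ℝ≥0∞} {𝒞 : Set (Set ι)}

theorem exists_runWord_mem_of_matpow_pos (h𝒞 : ∀ s, ∃ C ∈ 𝒞, s ∈ C) {n : ℕ} {i j : ι}
    (h : 0 < matpow p n i j) {S : Set ι} (hi : i ∈ S) :
    ∃ w : List (Set ι), (∀ C ∈ w, C ∈ 𝒞) ∧ j ∈ runWord p w S := by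
  induction n generalizing j with
  | zero =>
    obtain rfl : i = j := by by_contra hij; simp [matpow, hij] at h
    exact ⟨[], by simp, hi⟩
  | succ n ih =>
    obtain ⟨k, -, hk⟩ := Finset.exists_ne_zero_of_sum_ne_zero h.ne'
    obtain ⟨hik, hkj⟩ := mul_ne_zero_iff.mp hk
    obtain ⟨w, hw, hkw⟩ := ih (pos_iff_ne_zero.mpr hik)
    obtain ⟨C, hC, hjC⟩ := h𝒞 j
    refine ⟨w ++ [C], by simpa [or_imp, forall_and] using ⟨hw, hC⟩, ?_⟩
    simpa using ⟨hjC, k, hkw, pos_iff_ne_zero.mpr hkj⟩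

variable {C₀ : Set ι} {i₀ : ι}

theorem exists_word_runWord_eq_of_row_pos (h𝒞 : ∀ s, ∃ C ∈ 𝒞, s ∈ C)
    (hirr : ∀ i j, ∃ n, 0 < matpow p n i j) (hrow : ∀ j, 0 < p i₀ j) {X : Set ι}
    (hX : X.Nonempty) (hXC₀ : X ⊆ C₀) :
    ∃ v : List (Set ι), (∀ C ∈ v, C ∈ 𝒞) ∧
      runWord p (v ++ [C₀]) X = C₀ ∧ runWord p (v ++ [C₀]) C₀ = C₀ := by
  obtain ⟨x, hx⟩ := hX
  obtain ⟨n, hn⟩ := hirr x i₀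
  obtain ⟨v, hv, hi₀v⟩ := exists_runWord_mem_of_matpow_pos h𝒞 hn hx
  refine ⟨v, hv, ?_, ?_⟩ <;> rw [runWord_append, runWord_singleton]
  exacts [stepIn_eq_of_row_pos hrow C₀ hi₀v,
    stepIn_eq_of_row_pos hrow C₀ (runWord_mono v hXC₀ hi₀v)]

theorem exists_collapsing_word (h𝒞 : ∀ s, ∃ C ∈ 𝒞, s ∈ C) (hC₀ : C₀ ∈ 𝒞)
    (hirr : ∀ i j, ∃ n, 0 < matpow p n i j) (hrow : ∀ j, 0 < p i₀ j) :
    ∃ w : List (Set ι), w ≠ [] ∧ (∀ C ∈ w, C ∈ 𝒞) ∧ runWord p w {i₀} = C₀ ∧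
      ∀ i, runWord p w {i} = ∅ ∨ runWord p w {i} = C₀ := by
  suffices h : ∀ T : Finset ι, ∃ v : List (Set ι), (∀ C ∈ v, C ∈ 𝒞) ∧
      runWord p (v ++ [C₀]) {i₀} = C₀ ∧
      ∀ i ∈ T, runWord p (v ++ [C₀]) {i} = ∅ ∨ runWord p (v ++ [C₀]) {i} = C₀ by
    obtain ⟨v, hv, hi₀, hcoll⟩ := h Finset.univ
    exact ⟨v ++ [C₀], by simp, by simpa [or_imp, forall_and] using ⟨hv, hC₀⟩, hi₀,
      fun i => hcoll i (Finset.mem_univ i)⟩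
  intro T
  induction T using Finset.induction_on with
  | empty => exact ⟨[], by simp, stepIn_eq_of_row_pos hrow C₀ rfl, by simp⟩
  | insert s T _ ih =>
    obtain ⟨v, hv, hi₀, hT⟩ := ih
    set u := v ++ [C₀]
    rcases (runWord p u {s}).eq_empty_or_nonempty with hs | hs
    · exact ⟨v, hv, hi₀, Finset.forall_mem_insert .. |>.mpr ⟨.inl hs, hT⟩⟩
    have hsC₀ : runWord p u {s} ⊆ C₀ := by
      simpa [u] using stepIn_subset C₀ (runWord p v {s})
    obtain ⟨v', hv', hsv', hC₀v'⟩ := exists_word_runWord_eq_of_row_pos h𝒞 hirr hrow hs hsC₀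
    refine ⟨u ++ v', by simpa [u, or_imp, forall_and] using ⟨hv, hC₀, hv'⟩, ?_, ?_⟩
    · rw [List.append_assoc, runWord_append, hi₀, hC₀v']
    · intro i hi
      rw [List.append_assoc, runWord_append]
      rcases Finset.mem_insert.mp hi with rfl | hi
      · exact .inr hsv'
      · rcases hT i hi with h | h <;> simp [h, hC₀v']

end CollapsingWords

section Supports

variable {X ι : Type*}

def emisProfile (f : ι → X → ℝ≥0∞) (x : X) : Set ι := {i | 0 < f i x}

def clusterStrings (f : ι → X → ℝ≥0∞) (w : List (Set ι)) : Set (Fin (w.length + 1) → X) :=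
  {x | ∀ k : Fin w.length, emisProfile f (x k.succ) = w[k]}

theorem iInter_emisSupp_diff_iUnion_eq (f : ι → X → ℝ≥0∞) (C : Set ι) :
    (⋂ i ∈ C, emisSupp f i) \ (⋃ i ∈ Cᶜ, emisSupp f i) = {x | emisProfile f x = C} := by
  ext x
  simp only [emisProfile, emisSupp, Set.ext_iff]
  simp only [Set.mem_sdiff, Set.mem_iInter, Set.mem_iUnion, Set.mem_compl_iff, exists_prop,
    not_exists, not_and, Set.mem_ofPred_eq]
  grind [pos_iff_ne_zero]

theorem isCluster_iff [MeasurableSpace X] {μ : Measure X} {f : ι → X → ℝ≥0∞} {C : Set ι} :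
    IsCluster μ f C ↔ 0 < μ {x | emisProfile f x = C} := by
  rw [IsCluster, iInter_emisSupp_diff_iUnion_eq]

theorem exists_isCluster_mem [MeasurableSpace X] [Finite ι] {μ : Measure X}
    {f : ι → X → ℝ≥0∞} {s : ι} (hs : μ (emisSupp f s) ≠ 0) : ∃ C, IsCluster μ f C ∧ s ∈ C := by
  by_contra! h
  have hsupp : emisSupp f s ⊆ ⋃ C ∈ {C : Set ι | s ∈ C}, {x | emisProfile f x = C} :=
    fun x hx => Set.mem_biUnion (x := emisProfile f x) hx rfl
  refine hs (measure_mono_null hsupp ((measure_biUnion_null_iff (Set.to_countable _)).mpr ?_))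
  exact fun C hsC => by simpa [isCluster_iff] using mt (h C) (not_not.mpr hsC)

theorem proj1_clusterStrings [MeasurableSpace X] {μ : Measure X} {f : ι → X → ℝ≥0∞}
    {w : List (Set ι)} (hw : ∀ C ∈ w, IsCluster μ f C) : proj1 (clusterStrings f w) = Set.univ := by
  have hne (k : Fin w.length) : {x | emisProfile f x = w[k]}.Nonempty :=
    nonempty_of_measure_ne_zero (isCluster_iff.mp (hw _ (List.getElem_mem k.isLt))).ne'
  choose d hd using hne
  exact Set.eq_univ_of_forall fun a => ⟨Fin.cons a d, fun k => by simpa using hd k, rfl⟩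

theorem secSet_clusterStrings (f : ι → X → ℝ≥0∞) (w : List (Set ι)) (a : X) :
    secSet (clusterStrings f w) a =
      Set.univ.pi fun k : Fin w.length => {x | emisProfile f x = w[k]} := by
  ext x
  simp [secSet, clusterStrings]

end Supports

section HiddenMarkovSupport

variable {X ι : Type*} [Fintype ι] [DecidableEq ι] {q : X × ι → X × ι → ℝ≥0∞}
  {pm : ι → ι → ℝ≥0∞} {f : ι → X → ℝ≥0∞}

theorem pijD_pos_iff (hq : ∀ x i x' j, q (x', j) (x, i) = pm i j * f j x') {R : ℕ}
    (x : Fin (R + 1) → X) (i j : ι) :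
    0 < pijD q x i j ↔ ∃ y : Fin (R + 1) → ι, y 0 = i ∧ y (Fin.last R) = j ∧
      ∀ k : Fin R, 0 < pm (y k.castSucc) (y k.succ) ∧ y k.succ ∈ emisProfile f (x k.succ) := by
  simp only [pijD, hq, emisProfile, Set.mem_ofPred_eq, pos_iff_ne_zero, ne_eq,
    Finset.sum_eq_zero_iff, Finset.mem_univ, true_imp_iff, not_forall, ite_eq_right_iff,
    Finset.prod_eq_zero_iff, mul_eq_zero, true_and, not_or, not_exists, exists_prop, and_assoc]

theorem pijD_pos_iff_mem_runWord (hq : ∀ x i x' j, q (x', j) (x, i) = pm i j * f j x')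
    {w : List (Set ι)} {x : Fin (w.length + 1) → X} (hx : x ∈ clusterStrings f w) (i j : ι) :
    0 < pijD q x i j ↔ j ∈ runWord pm w {i} := by
  simp only [pijD_pos_iff hq, mem_runWord_iff, hx _, Set.mem_singleton_iff]

theorem yplus_eq_of_collapsing (hq : ∀ x i x' j, q (x', j) (x, i) = pm i j * f j x')
    {w : List (Set ι)} {B : Set ι} (hcoll : ∀ i, runWord pm w {i} = ∅ ∨ runWord pm w {i} = B)
    {x : Fin (w.length + 1) → X} (hx : x ∈ clusterStrings f w) :
    Yplus q x = {i | runWord pm w {i} = B} ×ˢ B := by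
  ext ⟨i, j⟩
  simp only [Yplus, Set.mem_ofPred_eq, pijD_pos_iff_mem_runWord hq hx, Set.mem_prod]
  rcases hcoll i with h | h
  · simp only [h, Set.notMem_empty, false_iff, not_and]
    exact fun hB => hB ▸ Set.notMem_empty j
  · simp [h]

theorem assumption1_clusterStrings (hq : ∀ x i x' j, q (x', j) (x, i) = pm i j * f j x')
    {w : List (Set ι)} (hw : w ≠ []) {B : Set ι} (hB : B.Nonempty) {i₀ : ι}
    (hi₀ : runWord pm w {i₀} = B) (hcoll : ∀ i, runWord pm w {i} = ∅ ∨ runWord pm w {i} = B) :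
    Assumption1 q (clusterStrings f w) ({i | runWord pm w {i} = B} ×ˢ B) := by
  obtain ⟨b, hb⟩ := hB
  refine ⟨List.length_pos_iff.mpr hw, ⟨(i₀, b), hi₀, hb⟩,
    fun x hx => yplus_eq_of_collapsing hq hcoll hx, ?_⟩
  rw [Set.fst_image_prod _ ⟨b, hb⟩, Set.snd_image_prod ⟨i₀, hi₀⟩]

end HiddenMarkovSupport

theorem IsIrreducibilityMeasure.isMaxIrreducibilityMeasure {S : Type*} [MeasurableSpace S]
    [Nonempty S] {κ : Kernel S S} {ψ : Measure S} [SigmaFinite ψ]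
    (hψ : IsIrreducibilityMeasure κ ψ) (hac : ∀ k, 1 ≤ k → ∀ z, kpow κ k z ≪ ψ) :
    IsMaxIrreducibilityMeasure κ ψ := by
  refine ⟨inferInstance, hψ, fun φ _ hφ => Measure.AbsolutelyContinuous.mk fun A hA hψA => ?_⟩
  by_contra hφA
  obtain ⟨k, hk, hpos⟩ := hφ A hA (pos_iff_ne_zero.mpr hφA) (Classical.arbitrary S)
  exact hpos.ne' (hac k hk _ hψA)

section Emission

variable {X ι : Type*} [MeasurableSpace X] {μ : Measure X} {f : ι → X → ℝ≥0∞}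

theorem measure_emisSupp_ne_zero {j : ι} (h : ∫⁻ x, f j x ∂μ ≠ 0) : μ (emisSupp f j) ≠ 0 := by
  contrapose! h
  exact (lintegral_congr_ae (measure_mono_null (fun x hx => pos_iff_ne_zero.mpr hx) h)).trans
    lintegral_zero

variable [MeasurableSpace ι]

theorem measurable_of_transition_eq {q : X × ι → X × ι → ℝ≥0∞} {pm : ι → ι → ℝ≥0∞}
    (hqm : Measurable (Function.uncurry q)) (hq : ∀ x i x' j, q (x', j) (x, i) = pm i j * f j x')
    {i₀ j : ι} (hpos : pm i₀ j ≠ 0) (hfin : pm i₀ j ≠ ∞) (x₀ : X) : Measurable (f j) := by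
  have hf : f j = fun x => (pm i₀ j)⁻¹ * q (x, j) (x₀, i₀) := funext fun x => by
    rw [hq, ← mul_assoc, ENNReal.inv_mul_cancel hpos hfin, one_mul]
  exact hf ▸ measurable_const.mul (hqm.comp (measurable_prodMk_right.prodMk measurable_const))

variable [Fintype ι] [MeasurableSingletonClass ι]

theorem lintegral_prod_count {g : X × ι → ℝ≥0∞} (hg : Measurable g) :
    ∫⁻ z, g z ∂(μ.prod Measure.count) = ∑ j, ∫⁻ x, g (x, j) ∂μ := by
  rw [lintegral_prod _ hg.aemeasurable]
  simp only [lintegral_count, tsum_fintype]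
  exact lintegral_finsetSum _ fun j _ => hg.comp measurable_prodMk_right

variable (μ f) in
noncomputable def emissionMix (a : ι → ℝ≥0∞) : Measure (X × ι) :=
  (μ.prod Measure.count).withDensity fun z => a z.2 * f z.2 z.1

theorem lintegral_emissionMix (hfm : ∀ j, Measurable (f j)) (a : ι → ℝ≥0∞)
    {g : X × ι → ℝ≥0∞} (hg : Measurable g) :
    ∫⁻ z, g z ∂emissionMix μ f a = ∑ j, a j * ∫⁻ x, f j x * g (x, j) ∂μ := by
  have hd : Measurable fun z : X × ι => a z.2 * f z.2 z.1 :=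
    measurable_from_prod_countable_left fun j => by simpa using (hfm j).const_mul (a j)
  rw [emissionMix, lintegral_withDensity_eq_lintegral_mul _ hd hg, lintegral_prod_count (hd.mul hg)]
  simp only [Pi.mul_apply, mul_assoc]
  exact Finset.sum_congr rfl fun j _ =>
    lintegral_const_mul _ ((hfm j).mul (hg.comp measurable_prodMk_right))

theorem emissionMix_apply (hfm : ∀ j, Measurable (f j)) (a : ι → ℝ≥0∞) {A : Set (X × ι)}
    (hA : MeasurableSet A) :
    emissionMix μ f a A = ∑ j, a j * ∫⁻ x in (·, j) ⁻¹' A, f j x ∂μ := by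
  rw [← lintegral_indicator_one hA, lintegral_emissionMix hfm a (measurable_one.indicator hA)]
  refine Finset.sum_congr rfl fun j _ => congrArg _ ?_
  rw [← lintegral_indicator (measurable_prodMk_right hA)]
  congr with x
  by_cases hx : (x, j) ∈ A <;> simp [hx]

theorem isFiniteMeasure_emissionMix_one (hfm : ∀ j, Measurable (f j))
    (hf : ∀ j, ∫⁻ x, f j x ∂μ = 1) : IsFiniteMeasure (emissionMix μ f 1) :=
  ⟨by simp [emissionMix_apply hfm _ MeasurableSet.univ, hf]⟩

theorem emissionMix_absolutelyContinuous_one (hfm : ∀ j, Measurable (f j)) (a : ι → ℝ≥0∞) :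
    emissionMix μ f a ≪ emissionMix μ f 1 :=
  Measure.AbsolutelyContinuous.mk fun A hA h => by
    simp_all [emissionMix_apply hfm _ hA, Finset.sum_eq_zero_iff]

theorem emissionMix_one_univ_prod_pos (hfm : ∀ j, Measurable (f j))
    (hf : ∀ j, ∫⁻ x, f j x ∂μ = 1) {A : Set ι} (hA : A.Nonempty) :
    0 < emissionMix μ f 1 (Set.univ ×ˢ A) := by
  obtain ⟨i, hi⟩ := hA
  rw [emissionMix_apply hfm 1 (MeasurableSet.univ.prod A.toFinite.measurableSet),
    Finset.sum_pos_iff]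
  exact ⟨i, Finset.mem_univ i, by simp [Set.mk_preimage_prod_left hi, hf]⟩

end Emission

section HiddenMarkovKernel

variable {X ι : Type*} [MeasurableSpace X] [MeasurableSpace ι] [Fintype ι] [DecidableEq ι]
  [MeasurableSingletonClass ι] {μ : Measure X} {f : ι → X → ℝ≥0∞} {pm : ι → ι → ℝ≥0∞}
  {κ : Kernel (X × ι) (X × ι)}

theorem kpow_succ_eq_emissionMix (hκ : ∀ x i, κ (x, i) = emissionMix μ f (pm i))
    (hfm : ∀ j, Measurable (f j)) (hf : ∀ j, ∫⁻ x, f j x ∂μ = 1) (n : ℕ) (x : X) (i : ι) :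
    kpow κ (n + 1) (x, i) = emissionMix μ f (matpow pm (n + 1) i) := by
  induction n generalizing x i with
  | zero =>
    rw [kpow, kpow, Kernel.id_comp, hκ]
    exact congrArg _ (funext fun j => (matpow_one i j).symm)
  | succ n ih =>
    ext A hA
    rw [kpow, Kernel.comp_apply' _ _ _ hA, hκ,
      lintegral_emissionMix hfm _ (Kernel.measurable_coe _ hA)]
    simp_rw [ih, emissionMix_apply hfm _ hA, lintegral_mul_const _ (hfm _), hf, one_mul,
      matpow_succ' (n + 1), Finset.mul_sum, Finset.sum_mul, mul_assoc]
    exact Finset.sum_comm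

theorem isIrreducibilityMeasure_emissionMix_one (hκ : ∀ x i, κ (x, i) = emissionMix μ f (pm i))
    (hfm : ∀ j, Measurable (f j)) (hf : ∀ j, ∫⁻ x, f j x ∂μ = 1)
    (hirr : ∀ i j, ∃ n, 1 ≤ n ∧ 0 < matpow pm n i j) :
    IsIrreducibilityMeasure κ (emissionMix μ f 1) := by
  rintro A hA hψA ⟨x, i⟩
  rw [emissionMix_apply hfm 1 hA, Finset.sum_pos_iff] at hψA
  obtain ⟨j, -, hj⟩ := hψA
  obtain ⟨n, hn, hij⟩ := hirr i j
  obtain ⟨m, rfl⟩ : ∃ m, n = m + 1 := ⟨n - 1, by omega⟩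
  refine ⟨m + 1, hn, ?_⟩
  rw [kpow_succ_eq_emissionMix hκ hfm hf, emissionMix_apply hfm _ hA, Finset.sum_pos_iff]
  exact ⟨j, Finset.mem_univ j, ENNReal.mul_pos hij.ne' (by simpa using hj.ne')⟩

theorem isMaxIrreducibilityMeasure_emissionMix_one [Nonempty X] [Nonempty ι]
    (hκ : ∀ x i, κ (x, i) = emissionMix μ f (pm i)) (hfm : ∀ j, Measurable (f j))
    (hf : ∀ j, ∫⁻ x, f j x ∂μ = 1) (hirr : ∀ i j, ∃ n, 1 ≤ n ∧ 0 < matpow pm n i j) :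
    IsMaxIrreducibilityMeasure κ (emissionMix μ f 1) :=
  haveI := isFiniteMeasure_emissionMix_one hfm hf
  (isIrreducibilityMeasure_emissionMix_one hκ hfm hf hirr).isMaxIrreducibilityMeasure
    fun k hk ⟨x, i⟩ => by
      obtain ⟨m, rfl⟩ : ∃ m, k = m + 1 := ⟨k - 1, by omega⟩
      rw [kpow_succ_eq_emissionMix hκ hfm hf]
      exact emissionMix_absolutelyContinuous_one hfm _

theorem assumption2_clusterStrings [SigmaFinite μ] [Nonempty X] [Nonempty ι]
    (hκ : ∀ x i, κ (x, i) = emissionMix μ f (pm i)) (hfm : ∀ j, Measurable (f j))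
    (hf : ∀ j, ∫⁻ x, f j x ∂μ = 1) (hirr : ∀ i j, ∃ n, 1 ≤ n ∧ 0 < matpow pm n i j)
    {w : List (Set ι)} (hw : ∀ C ∈ w, IsCluster μ f C) {Yp : Set (ι × ι)}
    (hYp : (Prod.fst '' Yp).Nonempty) :
    Assumption2 κ (emissionMix μ f 1) μ (clusterStrings f w) Yp := by
  refine ⟨isMaxIrreducibilityMeasure_emissionMix_one hκ hfm hf hirr, ?_, fun a _ => ?_⟩
  · rw [proj1_clusterStrings hw]
    exact emissionMix_one_univ_prod_pos hfm hf hYp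
  · rw [secSet_clusterStrings, Measure.pi_pi]
    exact CanonicallyOrderedAdd.prod_pos.mpr fun k _ =>
      isCluster_iff.mp (hw _ (List.getElem_mem k.isLt))

end HiddenMarkovKernel

theorem hmm_positive_row_implies_A1_A2_general
    (P : Measure Ω) (Z : ℕ → Ω → 𝓧 × 𝓨) (κ : Kernel (𝓧 × 𝓨) (𝓧 × 𝓨)) (μ : Measure 𝓧)
    (q : 𝓧 × 𝓨 → 𝓧 × 𝓨 → ℝ≥0∞) (p0 : 𝓧 × 𝓨 → ℝ≥0∞)
    (pm : 𝓨 → 𝓨 → ℝ≥0∞) (f : 𝓨 → 𝓧 → ℝ≥0∞)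
    (hPMM : IsPMM P Z κ μ q p0)
    (hq : ∀ x i x' j, q (x', j) (x, i) = pm i j * f j x')
    (hstoch : ∀ i : 𝓨, ∑ j : 𝓨, pm i j = 1)
    (hf : ∀ j : 𝓨, ∫⁻ x', f j x' ∂μ = 1)
    (hirr : ∀ i j : 𝓨, ∃ n : ℕ, 1 ≤ n ∧ 0 < matpow pm n i j)
    (i₀ : 𝓨) (hrow : ∀ j : 𝓨, 0 < pm i₀ j) :
    ∃ (R : ℕ) (E : Set (Fin (R + 1) → 𝓧)) (Yp : Set (𝓨 × 𝓨)) (ψ : Measure (𝓧 × 𝓨)),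
      Assumption1 q E Yp ∧ Assumption2 κ ψ μ E Yp := by
  obtain ⟨-, -, hμ, hqm, -, hκq, -⟩ := hPMM
  have hκ (x : 𝓧) (i : 𝓨) : κ (x, i) = emissionMix μ f (pm i) :=
    (hκq (x, i)).trans (congrArg _ (funext fun z => hq x i z.1 z.2))
  have hsupp (j : 𝓨) : μ (emisSupp f j) ≠ 0 := measure_emisSupp_ne_zero (by simp [hf])
  obtain ⟨x₀, -⟩ := nonempty_of_measure_ne_zero (hsupp i₀)
  have hfm (j : 𝓨) : Measurable (f j) :=
    measurable_of_transition_eq hqm hq (hrow j).ne'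
      ((ENNReal.sum_ne_top.mp (by simp [hstoch])) j (Finset.mem_univ j)) x₀
  obtain ⟨C₀, hC₀, hi₀C₀⟩ := exists_isCluster_mem (hsupp i₀)
  obtain ⟨w, hw, hwC, hi₀w, hcoll⟩ := exists_collapsing_word (𝒞 := {C | IsCluster μ f C})
    (fun s => exists_isCluster_mem (hsupp s)) hC₀ (fun i j => (hirr i j).imp fun _ => And.right)
    hrow
  have : Nonempty 𝓧 := ⟨x₀⟩
  refine ⟨w.length, clusterStrings f w, {i | runWord pm w {i} = C₀} ×ˢ C₀, emissionMix μ f 1,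
    assumption1_clusterStrings hq hw ⟨i₀, hi₀C₀⟩ hi₀w hcoll,
    assumption2_clusterStrings hκ hfm hf hirr hwC ?_⟩
  rw [Set.fst_image_prod _ ⟨i₀, hi₀C₀⟩]
  exact ⟨i₀, hi₀w⟩

/-- Proposition 4. Let `Z` be a hidden Markov model whose transition
matrix `ℙ` is irreducible and has at least one row with all entries strictly positive.
Then **A1** and **A2** hold. -/
theorem hmm_positive_row_implies_A1_A2
    [TopologicalSpace 𝓧] [PolishSpace 𝓧] [BorelSpace 𝓧]
    (P : Measure Ω) (Z : ℕ → Ω → 𝓧 × 𝓨) (κ : Kernel (𝓧 × 𝓨) (𝓧 × 𝓨)) (μ : Measure 𝓧)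
    (q : 𝓧 × 𝓨 → 𝓧 × 𝓨 → ℝ≥0∞) (p0 : 𝓧 × 𝓨 → ℝ≥0∞)
    (pm : 𝓨 → 𝓨 → ℝ≥0∞) (f : 𝓨 → 𝓧 → ℝ≥0∞)
    (hPMM : IsPMM P Z κ μ q p0)
    (hq : ∀ x i x' j, q (x', j) (x, i) = pm i j * f j x')
    (hstoch : ∀ i : 𝓨, ∑ j : 𝓨, pm i j = 1)
    (hf : ∀ j : 𝓨, ∫⁻ x', f j x' ∂μ = 1)
    (hirr : ∀ i j : 𝓨, ∃ n : ℕ, 1 ≤ n ∧ 0 < matpow pm n i j)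
    (i₀ : 𝓨) (hrow : ∀ j : 𝓨, 0 < pm i₀ j) :
    ∃ (R : ℕ) (E : Set (Fin (R + 1) → 𝓧)) (Yp : Set (𝓨 × 𝓨)) (ψ : Measure (𝓧 × 𝓨)),
      Assumption1 q E Yp ∧ Assumption2 κ ψ μ E Yp :=
  hmm_positive_row_implies_A1_A2_general P Z κ μ q p0 pm f hPMM hq hstoch hf hirr i₀ hrow

end PMMPaper
end

section
/- Let Z be a ψ-irreducible linear Markov switching model on X = ℝ^d. Suppose: (i) there exist a set C ⊂ Y and ε > 0 such that for all x ∈ B(0,ε), h_i(x) > 0 if and only if i ∈ C, and the sub-stochastic matrix (p_{ij})_{i,j∈C} is primitive; and (ii) with Y_C := {i ∈ Y : p_{ij} > 0 for some j ∈ C}, there exists i₀ ∈ Y_C such that (0, i₀) lies in the support of ψ. Then Z satisfies assumptions A1 and A2. -/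
open MeasureTheory ProbabilityTheory ENNReal

namespace PMMPaper

/-! ### Pairwise Markov models -/

variable {𝓧 : Type*} [MeasurableSpace 𝓧] {𝓨 : Type*} [Fintype 𝓨] [DecidableEq 𝓨]
  [MeasurableSpace 𝓨] [MeasurableSingletonClass 𝓨] [Nonempty 𝓨]
  {Ω : Type*} [MeasurableSpace Ω]

/-! Choose `δ > 0` with `a - F j b ∈ B(0, ε)` for all `a, b ∈ B(0, δ)` and all `j`, and let
`E = B(0, δ)^(R+2)`. Along any `x ∈ E` every innovation `x_{k+1} - F j x_k` lies in `B(0, ε)`,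
so a state path has positive density exactly when each step has `p_{ij} > 0` and lands in `C`.
Primitivity of `p` on `C` then gives `Y⁺(x) = Y_C × C` for every `x ∈ E`. For A2, `E_(1)` is
the ball `B(0, δ)`, which `ψ` charges near `(0, i₀)`, and every section of `E` is an open box. -/

section Lemmas

variable {X Y : Type*}

lemma subMat_ne_zero_iff {p : Y → Y → ℝ≥0∞} {C : Set Y} {a b : Y} :
    subMat p C a b ≠ 0 ↔ a ∈ C ∧ b ∈ C ∧ p a b ≠ 0 := by
  simp [subMat]

variable [Fintype Y] [DecidableEq Y]

lemma exists_path_of_matpow_pos (p : Y → Y → ℝ≥0∞) :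
    ∀ (n : ℕ) (i j : Y), matpow p n i j ≠ 0 →
      ∃ y : Fin (n + 1) → Y, y 0 = i ∧ y (Fin.last n) = j ∧
        ∀ k : Fin n, p (y k.castSucc) (y k.succ) ≠ 0
  | 0, i, j, hij => by
    refine ⟨fun _ => i, rfl, ?_, Fin.elim0⟩
    by_contra hne
    exact hij (if_neg hne)
  | n + 1, i, j, hij => by
    obtain ⟨k, -, hk⟩ := Finset.exists_ne_zero_of_sum_ne_zero hij
    obtain ⟨y, hy0, hyk, hy⟩ := exists_path_of_matpow_pos p n i k (left_ne_zero_of_mul hk)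
    refine ⟨Fin.snoc y j, by simpa using hy0, Fin.snoc_last _ _, Fin.lastCases ?_ fun m => ?_⟩
    · rw [Fin.succ_last, Fin.snoc_last, Fin.snoc_castSucc, hyk]
      exact right_ne_zero_of_mul hk
    · rw [Fin.succ_castSucc, Fin.snoc_castSucc, Fin.snoc_castSucc]
      exact hy m

lemma pijD_ne_zero_iff (q : X × Y → X × Y → ℝ≥0∞) {R : ℕ} (x : Fin (R + 1) → X) (i j : Y) :
    pijD q x i j ≠ 0 ↔ ∃ y : Fin (R + 1) → Y, y 0 = i ∧ y (Fin.last R) = j ∧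
      ∀ k : Fin R, q (x k.succ, y k.succ) (x k.castSucc, y k.castSucc) ≠ 0 := by
  simp [pijD, Finset.prod_eq_zero_iff]

lemma Yplus_eq_prod_of_primitive (q : X × Y → X × Y → ℝ≥0∞) (p : Y → Y → ℝ≥0∞) (C : Set Y)
    {R : ℕ} (x : Fin (R + 2) → X)
    (hprim : ∀ i ∈ C, ∀ j ∈ C, 0 < matpow (subMat p C) R i j)
    (hqx : ∀ (k : Fin (R + 1)) (i j : Y),
      q (x k.succ, j) (x k.castSucc, i) ≠ 0 ↔ p i j ≠ 0 ∧ j ∈ C) :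
    Yplus q x = {i | ∃ j ∈ C, 0 < p i j} ×ˢ C := by
  ext ⟨i, j⟩
  simp only [Yplus, Set.mem_ofPred_eq, Set.mem_prod, pos_iff_ne_zero, pijD_ne_zero_iff]
  constructor
  · rintro ⟨y, rfl, rfl, hy⟩
    refine ⟨⟨y 1, ((hqx 0 _ _).1 (hy 0)).symm⟩, ?_⟩
    simpa using ((hqx (Fin.last R) _ _).1 (hy (Fin.last R))).2
  · rintro ⟨⟨j₁, hj₁, hij₁⟩, hj⟩
    obtain ⟨w, hw0, hwl, hw⟩ :=
      exists_path_of_matpow_pos _ R j₁ j (hprim j₁ hj₁ j hj).ne'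
    have hwC : ∀ m, w m ∈ C :=
      Fin.cases (hw0 ▸ hj₁) fun m => (subMat_ne_zero_iff.1 (hw m)).2.1
    refine ⟨Fin.cons i w, rfl, by simpa [← Fin.succ_last] using hwl,
      fun k => (hqx k _ _).2 ⟨?_, by simpa using hwC k⟩⟩
    refine Fin.cases (by simpa [hw0] using hij₁) (fun m => ?_) k
    simpa [← Fin.succ_castSucc] using (subMat_ne_zero_iff.1 (hw m)).2.2

lemma exists_ball_sub_mem_ball {E ι : Type*} [SeminormedAddCommGroup E] [Finite ι]
    {f : ι → E → E} (hf : ∀ j, Continuous (f j)) (hf0 : ∀ j, f j 0 = 0) {ε : ℝ} (hε : 0 < ε) :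
    ∃ δ > 0, ∀ j, ∀ a ∈ Metric.ball (0 : E) δ, ∀ b ∈ Metric.ball (0 : E) δ,
      a - f j b ∈ Metric.ball (0 : E) ε := by
  have hev : ∀ᶠ ab : E × E in nhds 0, ∀ j, ab.1 - f j ab.2 ∈ Metric.ball (0 : E) ε := by
    refine Filter.eventually_all.2 fun j => ?_
    have hcont : Continuous fun ab : E × E => ab.1 - f j ab.2 := by fun_prop
    exact hcont.continuousAt.preimage_mem_nhds (by simpa [hf0] using Metric.ball_mem_nhds _ hε)
  obtain ⟨δ, hδ, hball⟩ := Metric.eventually_nhds_iff_ball.1 hev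
  refine ⟨δ, hδ, fun j a ha b hb => hball (a, b) ?_ j⟩
  simpa [← Prod.zero_eq_mk] using And.intro ha hb

lemma proj1_univ_pi {α : Type*} {R : ℕ} (U : Set α) :
    proj1 (Set.univ.pi fun _ : Fin (R + 1) => U) = U :=
  Set.Subset.antisymm (by rintro _ ⟨x, hx, rfl⟩; exact hx 0 trivial)
    fun a ha => ⟨fun _ => a, fun _ _ => ha, rfl⟩

lemma secSet_univ_pi {α : Type*} {R : ℕ} {U : Set α} {a : α} (ha : a ∈ U) :
    secSet (Set.univ.pi fun _ : Fin (R + 1) => U) a = Set.univ.pi fun _ => U := by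
  ext xr
  simp [secSet, Fin.forall_fin_succ, ha]

end Lemmas

theorem linear_switching_A1_A2_general {d : ℕ}
    (κ : Kernel (EuclideanSpace ℝ (Fin d) × 𝓨) (EuclideanSpace ℝ (Fin d) × 𝓨))
    (q : EuclideanSpace ℝ (Fin d) × 𝓨 → EuclideanSpace ℝ (Fin d) × 𝓨 → ℝ≥0∞)
    (pm : 𝓨 → 𝓨 → ℝ≥0∞)
    (F : 𝓨 → EuclideanSpace ℝ (Fin d) →ₗ[ℝ] EuclideanSpace ℝ (Fin d))
    (h : 𝓨 → EuclideanSpace ℝ (Fin d) → ℝ≥0∞)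
    (ψ : Measure (EuclideanSpace ℝ (Fin d) × 𝓨))
    (hq : ∀ x₁ i x₂ j, q (x₂, j) (x₁, i) = pm i j * h j (x₂ - F j x₁))
    (hmax : IsMaxIrreducibilityMeasure κ ψ)
    (C : Set 𝓨) (ε : ℝ) (hε : 0 < ε)
    (hC : ∀ x ∈ Metric.ball (0 : EuclideanSpace ℝ (Fin d)) ε, ∀ i : 𝓨, (0 < h i x ↔ i ∈ C))
    (R : ℕ)
    (hprim : ∀ i ∈ C, ∀ j ∈ C, 0 < matpow (subMat pm C) R i j)
    (i₀ : 𝓨) (hi₀ : ∃ j ∈ C, 0 < pm i₀ j)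
    (hsupp : ∀ ε' : ℝ, 0 < ε' →
      0 < ψ (Metric.ball (0 : EuclideanSpace ℝ (Fin d)) ε' ×ˢ ({i₀} : Set 𝓨))) :
    ∃ (R' : ℕ) (E : Set (Fin (R' + 1) → EuclideanSpace ℝ (Fin d))) (Yp : Set (𝓨 × 𝓨)),
      Assumption1 q E Yp ∧ Assumption2 κ ψ volume E Yp := by
  obtain ⟨δ, hδ, hball⟩ := exists_ball_sub_mem_ball
    (fun j => (F j).continuous_of_finiteDimensional) (fun j => map_zero (F j)) hε
  set U := Metric.ball (0 : EuclideanSpace ℝ (Fin d)) δ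
  set YC : Set 𝓨 := {i | ∃ j ∈ C, 0 < pm i j}
  obtain ⟨j₀, hj₀, hi₀j₀⟩ := hi₀
  have hYplus : ∀ x ∈ Set.univ.pi fun _ : Fin (R + 2) => U, Yplus q x = YC ×ˢ C :=
    fun x hx => Yplus_eq_prod_of_primitive q pm C x hprim fun k i j => by
      rw [hq, mul_ne_zero_iff, ← pos_iff_ne_zero (a := h j _),
        hC _ (hball j _ (hx _ trivial) _ (hx _ trivial))]
  have hfst : Prod.fst '' (YC ×ˢ C) = YC :=
    Set.fst_image_prod _ (show C.Nonempty from ⟨j₀, hj₀⟩)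
  refine ⟨R + 1, _, YC ×ˢ C, ⟨R.succ_pos, ⟨(i₀, j₀), ⟨j₀, hj₀, hi₀j₀⟩, hj₀⟩, hYplus, ?_⟩,
    hmax, ?_, fun x₁ hx₁ => ?_⟩
  · rw [hfst, Set.snd_image_prod (show YC.Nonempty from ⟨i₀, j₀, hj₀, hi₀j₀⟩)]
  · rw [proj1_univ_pi, hfst]
    exact (hsupp δ hδ).trans_le
      (measure_mono (Set.prod_mono_right (Set.singleton_subset_iff.2 ⟨j₀, hj₀, hi₀j₀⟩)))
  · rw [proj1_univ_pi] at hx₁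
    rw [secSet_univ_pi hx₁]
    exact (isOpen_set_pi Set.finite_univ fun _ _ => Metric.isOpen_ball).measure_pos _
      ⟨0, fun _ _ => Metric.mem_ball_self hδ⟩

/-- Lemma 3. Let `Z` be a `ψ`-irreducible linear Markov switching model
on `𝓧 = ℝ^d` (Lebesgue measure, kernel density `q(x₂,j | x₁,i) = p_{ij} h_j(x₂ − F(j)x₁)`).
Suppose (i) there are `C ⊆ 𝓨` and `ε > 0` such that for `x ∈ B(0,ε)`, `h_i(x) > 0` iff
`i ∈ C`, and the sub-stochastic matrix `(p_{ij})_{i,j∈C}` is primitive; and (ii) with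
`Y_C = {i : p_{ij} > 0 for some j ∈ C}`, there is `i₀ ∈ Y_C` with `(0, i₀) ∈ supp ψ`.
Then `Z` satisfies **A1** and **A2**. -/
theorem linear_switching_A1_A2 {d : ℕ}
    (P : Measure Ω) (Z : ℕ → Ω → EuclideanSpace ℝ (Fin d) × 𝓨)
    (κ : Kernel (EuclideanSpace ℝ (Fin d) × 𝓨) (EuclideanSpace ℝ (Fin d) × 𝓨))
    (q : EuclideanSpace ℝ (Fin d) × 𝓨 → EuclideanSpace ℝ (Fin d) × 𝓨 → ℝ≥0∞)
    (p0 : EuclideanSpace ℝ (Fin d) × 𝓨 → ℝ≥0∞)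
    (pm : 𝓨 → 𝓨 → ℝ≥0∞)
    (F : 𝓨 → EuclideanSpace ℝ (Fin d) →ₗ[ℝ] EuclideanSpace ℝ (Fin d))
    (h : 𝓨 → EuclideanSpace ℝ (Fin d) → ℝ≥0∞)
    (ψ : Measure (EuclideanSpace ℝ (Fin d) × 𝓨))
    (hPMM : IsPMM P Z κ volume q p0)
    (hq : ∀ x₁ i x₂ j, q (x₂, j) (x₁, i) = pm i j * h j (x₂ - F j x₁))
    (hstoch : ∀ i : 𝓨, ∑ j : 𝓨, pm i j = 1)
    (hdens : ∀ j : 𝓨, ∫⁻ x, h j x = 1)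
    (hmax : IsMaxIrreducibilityMeasure κ ψ)
    (C : Set 𝓨) (ε : ℝ) (hε : 0 < ε)
    (hC : ∀ x ∈ Metric.ball (0 : EuclideanSpace ℝ (Fin d)) ε, ∀ i : 𝓨, (0 < h i x ↔ i ∈ C))
    (R : ℕ) (hR : 1 ≤ R)
    (hprim : ∀ i ∈ C, ∀ j ∈ C, 0 < matpow (subMat pm C) R i j)
    (i₀ : 𝓨) (hi₀ : ∃ j ∈ C, 0 < pm i₀ j)
    (hsupp : ∀ ε' : ℝ, 0 < ε' →
      0 < ψ (Metric.ball (0 : EuclideanSpace ℝ (Fin d)) ε' ×ˢ ({i₀} : Set 𝓨))) :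
    ∃ (R' : ℕ) (E : Set (Fin (R' + 1) → EuclideanSpace ℝ (Fin d))) (Yp : Set (𝓨 × 𝓨)),
      Assumption1 q E Yp ∧ Assumption2 κ ψ volume E Yp :=
  linear_switching_A1_A2_general κ q pm F h ψ hq hmax C ε hε hC R hprim i₀ hi₀ hsupp

end PMMPaper
end

section
/- Let Z be a Harris recurrent Markov chain on Z with maximal irreducibility measure ψ. If a measurable set W ⊂ Z^n, n ≥ 2, satisfies ψ(W_(1)) > 0 and P_z(Z_{1:n} ∈ W) > 0 for all z ∈ W_(1) (where W_(1) := {z₁ : z_{1:n} ∈ W} is the first-coordinate projection), then for every z ∈ Z, P_z(Z_{l:l+n-1} ∈ W for infinitely many l) = 1. -/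
open MeasureTheory ProbabilityTheory ENNReal

namespace PMMPaper

/-! ### Pairwise Markov models -/

variable {𝓧 : Type*} [MeasurableSpace 𝓧] {𝓨 : Type*} [Fintype 𝓨] [DecidableEq 𝓨]
  [MeasurableSpace 𝓨] [MeasurableSingletonClass 𝓨] [Nonempty 𝓨]
  {Ω : Type*} [MeasurableSpace Ω]

/-! Let `Q x` be the probability that the chain started at `x` spells a word of `W` in its first
`n` steps. Since `Q > 0` on `W_(1)` and `ψ(W_(1)) > 0`, some level set `A = {Q > ε}` is charged
by `ψ`, so by Harris recurrence `A` is visited infinitely often. By the Markov property, a visit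
to `A` at time `k` is followed by `Z_{k:k+n-1} ∈ W` with conditional probability `Q(Z_k) > ε`.
Splitting at successive first visits to `A`, the probability of never seeing `W` after time `m`
while visiting `A` infinitely often is at most `(1 - ε)^K` for every `K`, hence zero.
The transition kernel need not be Markov, but it is a probability measure at almost every state
the chain visits, so it can be replaced by a Markov kernel without changing the chain. -/

open Filter Set

section GeometricTrials

variable {ℱ : Filtration ℕ ‹MeasurableSpace Ω›} {P : Measure Ω} [IsFiniteMeasure P]

theorem measure_diff_le_one_sub_mul {ε : ℝ≥0∞} {B C : Set Ω} (hB : MeasurableSet B)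
    (h : ε * P C ≤ P (C ∩ B)) : P (C \ B) ≤ (1 - ε) * P C := by
  calc P (C \ B) = P C - P (C ∩ B) := by
        rw [← measure_inter_add_sdiff C hB, ENNReal.add_sub_cancel_left (measure_ne_top P _)]
    _ ≤ P C - ε * P C := tsub_le_tsub_left h _
    _ = (1 - ε) * P C := by rw [ENNReal.sub_mul fun _ _ => measure_ne_top P C, one_mul]

theorem measurableSet_disjointed_filtration {m : ℕ} {f : ℕ → Set Ω}
    (hf : ∀ d, MeasurableSet[ℱ (m + d)] (f d)) (d : ℕ) :
    MeasurableSet[ℱ (m + d)] (disjointed f d) := by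
  rw [disjointed_eq_inter_compl]
  exact (hf d).inter <| .iInter fun i => .iInter fun hi =>
    (ℱ.mono (by omega) _ (hf i)).compl

theorem measure_inter_iInter_compl_inter_limsup_le_pow {A B : ℕ → Set Ω} {L : ℕ} {ε : ℝ≥0∞}
    (hA : ∀ k, MeasurableSet[ℱ k] (A k)) (hB : ∀ k, MeasurableSet[ℱ (k + L)] (B k))
    (hAB : ∀ k C, MeasurableSet[ℱ k] C → C ⊆ A k → ε * P C ≤ P (C ∩ B k)) (K : ℕ) :
    ∀ m C, MeasurableSet[ℱ m] C →
      P (C ∩ (⋂ l ≥ m, (B l)ᶜ) ∩ limsup A atTop) ≤ (1 - ε) ^ K * P C := by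
  induction K with
  | zero =>
    intro m C _
    simpa using measure_mono (inter_subset_left.trans inter_subset_left)
  | succ K ih =>
    intro m C hC
    -- split according to the first visit to `A` at or after time `m`
    set D := disjointed fun d => C ∩ A (m + d)
    have hD : ∀ d, MeasurableSet[ℱ (m + d)] (D d) := measurableSet_disjointed_filtration
      fun d => (ℱ.mono (Nat.le_add_right m d) _ hC).inter (hA (m + d))
    have hcover : C ∩ limsup A atTop ⊆ ⋃ d, D d := by
      rintro ω ⟨hωC, hω⟩
      obtain ⟨k, hmk, hωk⟩ := frequently_atTop.1 (mem_limsup_iff_frequently_mem.1 hω) m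
      rw [iUnion_disjointed]
      exact mem_iUnion.2 ⟨k - m, hωC, by rwa [Nat.add_sub_cancel' hmk]⟩
    have hpiece : ∀ d, P (D d ∩ (⋂ l ≥ m, (B l)ᶜ) ∩ limsup A atTop) ≤
        (1 - ε) ^ (K + 1) * P (D d) := by
      intro d
      have hDA : D d ⊆ A (m + d) := (disjointed_subset _ d).trans inter_subset_right
      calc P (D d ∩ (⋂ l ≥ m, (B l)ᶜ) ∩ limsup A atTop)
          ≤ P ((D d \ B (m + d)) ∩ (⋂ l ≥ m + d + L, (B l)ᶜ) ∩ limsup A atTop) := by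
            refine measure_mono fun ω ⟨⟨hωD, hωB⟩, hω⟩ => ⟨⟨⟨hωD, ?_⟩, ?_⟩, hω⟩
            · exact mem_iInter₂.1 hωB (m + d) (Nat.le_add_right m d)
            · exact mem_iInter₂.2 fun l hl => mem_iInter₂.1 hωB l (by omega)
        _ ≤ (1 - ε) ^ K * P (D d \ B (m + d)) :=
            ih _ _ ((ℱ.mono (by omega) _ (hD d)).diff (hB (m + d)))
        _ ≤ (1 - ε) ^ K * ((1 - ε) * P (D d)) := by
            gcongr
            exact measure_diff_le_one_sub_mul (ℱ.le _ _ (hB _)) (hAB _ _ (hD d) hDA)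
        _ = (1 - ε) ^ (K + 1) * P (D d) := by ring
    calc P (C ∩ (⋂ l ≥ m, (B l)ᶜ) ∩ limsup A atTop)
        ≤ P (⋃ d, D d ∩ (⋂ l ≥ m, (B l)ᶜ) ∩ limsup A atTop) := by
          rw [← iUnion_inter, ← iUnion_inter]
          exact measure_mono fun ω ⟨⟨hωC, hωB⟩, hω⟩ => ⟨⟨hcover ⟨hωC, hω⟩, hωB⟩, hω⟩
      _ ≤ ∑' d, P (D d ∩ (⋂ l ≥ m, (B l)ᶜ) ∩ limsup A atTop) := measure_iUnion_le _
      _ ≤ ∑' d, (1 - ε) ^ (K + 1) * P (D d) := ENNReal.tsum_le_tsum hpiece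
      _ = (1 - ε) ^ (K + 1) * P (⋃ d, D d) := by
          rw [ENNReal.tsum_mul_left,
            measure_iUnion (disjoint_disjointed _) fun d => ℱ.le _ _ (hD d)]
      _ ≤ (1 - ε) ^ (K + 1) * P C := by
          gcongr
          exact iUnion_subset fun d => (disjointed_subset _ d).trans inter_subset_left

theorem ae_mem_limsup_of_mul_le_measure_inter {A B : ℕ → Set Ω} {L : ℕ} {ε : ℝ≥0∞}
    (hA : ∀ k, MeasurableSet[ℱ k] (A k)) (hB : ∀ k, MeasurableSet[ℱ (k + L)] (B k))
    (hε : ε ≠ 0) (hAB : ∀ k C, MeasurableSet[ℱ k] C → C ⊆ A k → ε * P C ≤ P (C ∩ B k))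
    (hAio : ∀ᵐ ω ∂P, ω ∈ limsup A atTop) : ∀ᵐ ω ∂P, ω ∈ limsup B atTop := by
  have hnull : ∀ m, P ((⋂ l ≥ m, (B l)ᶜ) ∩ limsup A atTop) = 0 := by
    intro m
    have hpow := ENNReal.Tendsto.mul_const (ENNReal.tendsto_pow_atTop_nhds_zero_of_lt_one
      (ENNReal.sub_lt_self ENNReal.one_ne_top one_ne_zero hε)) (.inr (measure_ne_top P univ))
    rw [zero_mul] at hpow
    refine le_antisymm (ge_of_tendsto' hpow fun K => ?_) zero_le
    simpa using measure_inter_iInter_compl_inter_limsup_le_pow hA hB hAB K m univ .univ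
  filter_upwards [hAio, ae_all_iff.2 fun m => measure_eq_zero_iff_ae_notMem.1 (hnull m)]
    with ω hωA hω
  refine mem_limsup_iff_frequently_mem.2 (frequently_atTop.2 fun m => ?_)
  by_contra! hnot
  exact hω m ⟨mem_iInter₂.2 fun l hl => hnot l hl, hωA⟩

end GeometricTrials

section Window

variable {α S : Type*}

def window (Z : ℕ → α → S) (l n : ℕ) (ω : α) : Fin n → S := fun i => Z (l + i) ω

theorem window_succ (Z : ℕ → α → S) (l n : ℕ) (ω : α) :
    window Z l (n + 1) ω = Fin.snoc (window Z l n ω) (Z (l + n) ω) := by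
  funext i
  induction i using Fin.lastCases <;> simp [window]

theorem window_one (Z : ℕ → α → S) (l : ℕ) (ω : α) : window Z l 1 ω = fun _ => Z l ω := by
  funext i
  simp [window, Fin.fin_one_eq_zero i]

end Window

section MarkovChain

variable {S : Type*} [MeasurableSpace S]

def processFiltration (Z : ℕ → Ω → S) (hZ : ∀ k, Measurable (Z k)) :
    Filtration ℕ ‹MeasurableSpace Ω› where
  seq n := ⨆ i ∈ Iic n, MeasurableSpace.comap (Z i) inferInstance
  mono' _ _ hmn := biSup_mono fun _ hi => le_trans hi hmn
  le' _ := iSup₂_le fun i _ => (hZ i).comap_le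

theorem measurable_processFiltration {Z : ℕ → Ω → S} {hZ : ∀ k, Measurable (Z k)} {i n : ℕ}
    (hin : i ≤ n) : Measurable[processFiltration Z hZ n] (Z i) :=
  Measurable.of_comap_le <|
    le_iSup₂ (f := fun j (_ : j ∈ Iic n) => MeasurableSpace.comap (Z j) inferInstance) i hin

theorem measurable_window_processFiltration {Z : ℕ → Ω → S} {hZ : ∀ k, Measurable (Z k)}
    {l j : ℕ} : Measurable[processFiltration Z hZ (l + j)] (window Z l (j + 1)) :=
  @measurable_pi_lambda _ _ _ (processFiltration Z hZ (l + j)) _ _ fun i =>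
    measurable_processFiltration (by omega)

theorem measurable_fin_snoc {j : ℕ} :
    Measurable fun p : (Fin (j + 1) → S) × S => (Fin.snoc p.1 p.2 : Fin (j + 2) → S) := by
  refine measurable_pi_lambda _ fun i => ?_
  induction i using Fin.lastCases with
  | last => simpa using measurable_snd
  | cast i => simpa using measurable_fst.eval (a := i)

variable {P : Measure Ω} {Z : ℕ → Ω → S} {κ : Kernel S S}

theorem IsMarkovChain.measure_preimage_inter (h : IsMarkovChain P Z κ) {n : ℕ} {C : Set Ω}
    (hC : MeasurableSet[processFiltration Z h.1 n] C) {t : Set S} (ht : MeasurableSet t) :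
    P (Z (n + 1) ⁻¹' t ∩ C) = ∫⁻ ω in C, κ (Z n ω) t ∂P := by
  have hmk := h.2 n (t.indicator 1) (measurable_one.indicator ht) C hC
  simp_rw [lintegral_indicator_one ht] at hmk
  rw [← hmk, ← Measure.restrict_apply (h.1 _ ht), ← lintegral_indicator_one (h.1 _ ht)]
  rfl

open Classical in
noncomputable def markovModification (κ : Kernel S S) : Kernel S S :=
  Kernel.piecewise (κ.measurable_coe .univ (measurableSet_singleton 1)) κ
    (Kernel.deterministic id measurable_id)

theorem markovModification_apply {x : S} (hx : κ x univ = 1) : markovModification κ x = κ x := by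
  simp [markovModification, Kernel.piecewise_apply, hx]

instance : IsMarkovKernel (markovModification κ) := by
  refine ⟨fun x => ⟨?_⟩⟩
  by_cases hx : κ x univ = 1
  · rwa [markovModification_apply hx]
  · simp [markovModification, Kernel.piecewise_apply, hx]

theorem IsMarkovChain.ae_kernel_apply_univ [IsFiniteMeasure P] (h : IsMarkovChain P Z κ)
    (n : ℕ) : ∀ᵐ ω ∂P, κ (Z n ω) univ = 1 := by
  have hν : (fun x => κ x univ) =ᵐ[P.map (Z n)] 1 := by
    refine ae_eq_of_forall_setLIntegral_eq_of_sigmaFinite (κ.measurable_coe .univ)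
      measurable_one fun B hB _ => ?_
    rw [setLIntegral_map hB (κ.measurable_coe .univ) (h.1 n), Pi.one_def, setLIntegral_one,
      Measure.map_apply (h.1 n) hB,
      ← h.measure_preimage_inter (measurable_processFiltration le_rfl hB) .univ]
    simp
  exact ae_of_ae_map (h.1 n).aemeasurable hν

theorem IsMarkovChain.markovModification [IsFiniteMeasure P] (h : IsMarkovChain P Z κ) :
    IsMarkovChain P Z (markovModification κ) := by
  refine ⟨h.1, fun n g hg C hC => (h.2 n g hg C hC).trans
    (lintegral_congr_ae (ae_restrict_of_ae ?_))⟩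
  filter_upwards [h.ae_kernel_apply_univ n] with ω hω
  rw [markovModification_apply hω]

noncomputable def snocLIntegral (κ : Kernel S S) {j : ℕ} (f : (Fin (j + 2) → S) → ℝ≥0∞)
    (w : Fin (j + 1) → S) : ℝ≥0∞ :=
  ∫⁻ s, f (Fin.snoc w s) ∂κ (w (Fin.last j))

/-- `pathLIntegral κ j f x` is the integral of `f (X₀, …, X_j)` for the chain with kernel `κ`
started at `X₀ = x`, computed by integrating out the last state first. -/
noncomputable def pathLIntegral (κ : Kernel S S) :
    (j : ℕ) → ((Fin (j + 1) → S) → ℝ≥0∞) → S → ℝ≥0∞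
  | 0, f, x => f fun _ => x
  | j + 1, f, x => pathLIntegral κ j (snocLIntegral κ f) x

theorem measurable_snocLIntegral [IsSFiniteKernel κ] {j : ℕ} {f : (Fin (j + 2) → S) → ℝ≥0∞}
    (hf : Measurable f) : Measurable (snocLIntegral κ f) :=
  Measurable.lintegral_kernel_prod_right
    (κ := κ.comap (fun w : Fin (j + 1) → S => w (Fin.last j)) (measurable_pi_apply _))
    (hf.comp measurable_fin_snoc)

theorem measurable_pathLIntegral [IsSFiniteKernel κ] :
    ∀ (j : ℕ) {f : (Fin (j + 1) → S) → ℝ≥0∞}, Measurable f → Measurable (pathLIntegral κ j f)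
  | 0, _, hf => hf.comp (measurable_pi_lambda _ fun _ => measurable_id)
  | j + 1, _, hf => measurable_pathLIntegral j (measurable_snocLIntegral hf)

theorem IsMarkovChain.lintegral_window_snoc [IsFiniteMeasure P] [IsMarkovKernel κ]
    (h : IsMarkovChain P Z κ) {m j : ℕ} {C : Set Ω}
    (hC : MeasurableSet[processFiltration Z h.1 (m + j)] C)
    {f : (Fin (j + 1) → S) × S → ℝ≥0∞} (hf : Measurable f) :
    ∫⁻ ω in C, f (window Z m (j + 1) ω, Z (m + j + 1) ω) ∂P =
      ∫⁻ ω in C, ∫⁻ s, f (window Z m (j + 1) ω, s) ∂κ (Z (m + j) ω) ∂P := by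
  have hw : Measurable (window Z m (j + 1)) :=
    measurable_window_processFiltration.mono ((processFiltration Z h.1).le _) le_rfl
  have hpair : Measurable fun ω => (window Z m (j + 1) ω, Z (m + j + 1) ω) := hw.prodMk (h.1 _)
  let κLast := κ.comap (fun w : Fin (j + 1) → S => w (Fin.last j)) (measurable_pi_apply _)
  have hlaw : (P.restrict C).map (fun ω => (window Z m (j + 1) ω, Z (m + j + 1) ω)) =
      (P.restrict C).map (window Z m (j + 1)) ⊗ₘ κLast := by
    refine Measure.ext_prod fun {s t} hs ht => ?_
    rw [Measure.map_apply hpair (hs.prod ht), Measure.compProd_apply_prod hs ht,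
      setLIntegral_map hs (κLast.measurable_coe ht) hw, Measure.restrict_restrict (hw hs),
      Measure.restrict_apply (hpair (hs.prod ht)), mk_preimage_prod, inter_comm _ (Z _ ⁻¹' t),
      inter_assoc, h.measure_preimage_inter
        ((measurable_window_processFiltration hs).inter hC) ht]
    rfl
  rw [← lintegral_map hf hpair, hlaw, Measure.lintegral_compProd hf,
    lintegral_map (Measurable.lintegral_kernel_prod_right' hf) hw]
  rfl

theorem IsMarkovChain.lintegral_window [IsFiniteMeasure P] [IsMarkovKernel κ]
    (h : IsMarkovChain P Z κ) (j : ℕ) {m : ℕ} {C : Set Ω}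
    (hC : MeasurableSet[processFiltration Z h.1 m] C)
    {f : (Fin (j + 1) → S) → ℝ≥0∞} (hf : Measurable f) :
    ∫⁻ ω in C, f (window Z m (j + 1) ω) ∂P = ∫⁻ ω in C, pathLIntegral κ j f (Z m ω) ∂P := by
  induction j with
  | zero => exact lintegral_congr fun ω => congrArg f (window_one Z m ω)
  | succ j ih =>
    calc ∫⁻ ω in C, f (window Z m (j + 2) ω) ∂P
        = ∫⁻ ω in C, f (Fin.snoc (window Z m (j + 1) ω) (Z (m + j + 1) ω)) ∂P :=
          lintegral_congr fun ω => by rw [window_succ]; rfl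
      _ = ∫⁻ ω in C, snocLIntegral κ f (window Z m (j + 1) ω) ∂P :=
          h.lintegral_window_snoc ((processFiltration Z h.1).mono (Nat.le_add_right m j) _ hC)
            (hf.comp measurable_fin_snoc)
      _ = ∫⁻ ω in C, pathLIntegral κ (j + 1) f (Z m ω) ∂P := ih (measurable_snocLIntegral hf)

theorem IsMarkovChain.measure_window_preimage_inter [IsFiniteMeasure P] [IsMarkovKernel κ]
    (h : IsMarkovChain P Z κ) {j m : ℕ} {C : Set Ω}
    (hC : MeasurableSet[processFiltration Z h.1 m] C) {D : Set (Fin (j + 1) → S)}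
    (hD : MeasurableSet D) :
    P (window Z m (j + 1) ⁻¹' D ∩ C) = ∫⁻ ω in C, pathLIntegral κ j (D.indicator 1) (Z m ω) ∂P := by
  have hwD : MeasurableSet (window Z m (j + 1) ⁻¹' D) :=
    (processFiltration Z h.1).le _ _ (measurable_window_processFiltration hD)
  rw [← Measure.restrict_apply hwD, ← lintegral_indicator_one hwD]
  exact h.lintegral_window j hC (measurable_one.indicator hD)

theorem IsMarkovChain.mul_measure_le_measure_inter_window_preimage [IsFiniteMeasure P]
    [IsMarkovKernel κ] (h : IsMarkovChain P Z κ) {j m : ℕ} {C : Set Ω}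
    (hC : MeasurableSet[processFiltration Z h.1 m] C) {D : Set (Fin (j + 1) → S)}
    (hD : MeasurableSet D) {ε : ℝ≥0∞}
    (hCε : ∀ ω ∈ C, ε ≤ pathLIntegral κ j (D.indicator 1) (Z m ω)) :
    ε * P C ≤ P (C ∩ window Z m (j + 1) ⁻¹' D) := by
  rw [inter_comm, h.measure_window_preimage_inter hC hD, ← setLIntegral_const]
  exact setLIntegral_mono
    ((measurable_pathLIntegral j (measurable_one.indicator hD)).comp (h.1 m)) hCε

end MarkovChain

theorem exists_pos_measure_setOf_lt {α : Type*} [MeasurableSpace α] {μ : Measure α}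
    {s : Set α} {f : α → ℝ≥0∞} (hs : 0 < μ s) (hf : ∀ x ∈ s, 0 < f x) :
    ∃ ε, 0 < ε ∧ 0 < μ {x | ε < f x} := by
  by_contra! hnull
  have hcover : s ⊆ ⋃ n : ℕ, {x | (n : ℝ≥0∞)⁻¹ < f x} := fun x hx =>
    mem_iUnion.2 (ENNReal.exists_inv_nat_lt (hf x hx).ne')
  refine hs.ne' (measure_mono_null hcover (measure_iUnion_null fun n => ?_))
  exact nonpos_iff_eq_zero.1 (hnull _ (ENNReal.inv_pos.2 (ENNReal.natCast_ne_top n)))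

theorem measure_setOf_forall_exists_mem_eq_one_iff {P : Measure Ω} [IsProbabilityMeasure P]
    {B : ℕ → Set Ω} (hB : ∀ n, MeasurableSet (B n)) :
    P {ω | ∀ M, ∃ l, M ≤ l ∧ ω ∈ B l} = 1 ↔ ∀ᵐ ω ∂P, ω ∈ limsup B atTop := by
  have hlimsup : {ω | ∀ M, ∃ l, M ≤ l ∧ ω ∈ B l} = limsup B atTop := by
    ext ω
    simp [mem_limsup_iff_frequently_mem, frequently_atTop]
  rw [hlimsup]
  exact (mem_ae_iff_prob_eq_one (.measurableSet_limsup hB)).symm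

section MarkovFamily

variable {S : Type*} [MeasurableSpace S] {κ : Kernel S S} {Pz : S → Measure (ℕ → S)}

theorem IsMarkovFamily.isMarkovChain (hFam : IsMarkovFamily κ Pz) (z : S) :
    IsMarkovChain (Pz z) (fun k ω => ω k) (markovModification κ) :=
  have := hFam.1 z
  IsMarkovChain.markovModification ⟨measurable_pi_apply, hFam.2.2 z⟩

theorem IsMarkovFamily.measure_window_preimage (hFam : IsMarkovFamily κ Pz) {j : ℕ}
    {D : Set (Fin (j + 1) → S)} (hD : MeasurableSet D) (z : S) :
    Pz z {ω | (fun i : Fin (j + 1) => ω i) ∈ D} =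
      pathLIntegral (markovModification κ) j (D.indicator 1) z := by
  have := hFam.1 z
  have hQ := measurable_pathLIntegral (κ := markovModification κ) j (measurable_one.indicator hD)
  have hstart : ∀ᵐ ω ∂Pz z,
      pathLIntegral (markovModification κ) j (D.indicator 1) (ω 0) =
        pathLIntegral (markovModification κ) j (D.indicator 1) z := by
    refine (mem_ae_iff_prob_eq_one
      (hQ.comp (measurable_pi_apply 0) (measurableSet_singleton _))).2 ?_
    exact le_antisymm prob_le_one
      ((hFam.2.1 z).symm.le.trans (measure_mono fun ω hω => congrArg _ hω))
  have hset : {ω : ℕ → S | (fun i : Fin (j + 1) => ω i) ∈ D} =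
      window (fun k ω => ω k) 0 (j + 1) ⁻¹' D ∩ univ := by
    ext ω
    change _ ↔ (fun i : Fin (j + 1) => ω (0 + i)) ∈ D ∧ True
    simp
  rw [hset, (hFam.isMarkovChain z).measure_window_preimage_inter .univ hD, Measure.restrict_univ,
    lintegral_congr_ae hstart, lintegral_const, measure_univ, mul_one]

end MarkovFamily

theorem harris_visits_W_infinitely_often_general
    {S : Type*} [MeasurableSpace S]
    (κ : Kernel S S) (Pz : S → Measure (ℕ → S)) (ψ : Measure S)
    (hFam : IsMarkovFamily κ Pz)
    (hHarris : HarrisProp κ Pz ψ)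
    {N : ℕ} (W : Set (Fin (N + 2) → S)) (hWmeas : MeasurableSet W)
    (hW1 : 0 < ψ ((fun w => w 0) '' W))
    (hWpos : ∀ z ∈ (fun w => w 0) '' W,
      0 < Pz z {ω | (fun i : Fin (N + 2) => ω (i : ℕ)) ∈ W}) :
    ∀ z : S,
      Pz z {ω | ∀ M : ℕ, ∃ l : ℕ, M ≤ l ∧ (fun i : Fin (N + 2) => ω (l + (i : ℕ))) ∈ W} = 1 := by
  set Q := pathLIntegral (markovModification κ) (N + 1) (W.indicator 1)
  have hQ : Measurable Q := measurable_pathLIntegral _ (measurable_one.indicator hWmeas)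
  obtain ⟨ε, hε, hψ⟩ := exists_pos_measure_setOf_lt hW1 fun x hx =>
    hFam.measure_window_preimage hWmeas x ▸ hWpos x hx
  intro z
  have := hFam.1 z
  have hX := hFam.isMarkovChain z
  have hA : MeasurableSet {x | ε < Q x} := measurableSet_lt measurable_const hQ
  refine (measure_setOf_forall_exists_mem_eq_one_iff
    (B := fun l => window (fun k (ω : ℕ → S) => ω k) l (N + 2) ⁻¹' W) fun l =>
      measurable_window_processFiltration.mono ((processFiltration _ hX.1).le _) le_rfl hWmeas).2 ?_
  refine ae_mem_limsup_of_mul_le_measure_inter (ℱ := processFiltration _ hX.1)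
    (fun k => measurable_processFiltration le_rfl hA)
    (fun l => measurable_window_processFiltration hWmeas) hε.ne'
    (fun k C hC hCA => hX.mul_measure_le_measure_inter_window_preimage hC hWmeas
      fun ω hω => (hCA hω).le) ?_
  exact (measure_setOf_forall_exists_mem_eq_one_iff fun k => measurable_pi_apply k hA).1
    (hHarris _ hA hψ z)

/-- Lemma A.1. Let `Z` be a Harris recurrent Markov chain with maximal
irreducibility measure `ψ`. If a measurable set `W ⊆ 𝒵^n` (`n = N + 2 ≥ 2`) satisfies
`ψ(W_(1)) > 0` and `P_z(Z_{1:n} ∈ W) > 0` for all `z ∈ W_(1)`, then for every starting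
point `z`, `P_z(Z_{l:l+n−1} ∈ W for infinitely many l) = 1`. -/
theorem harris_visits_W_infinitely_often
    {S : Type*} [MeasurableSpace S]
    (κ : Kernel S S) (Pz : S → Measure (ℕ → S)) (ψ : Measure S)
    (hFam : IsMarkovFamily κ Pz)
    (hmax : IsMaxIrreducibilityMeasure κ ψ)
    (hHarris : HarrisProp κ Pz ψ)
    {N : ℕ} (W : Set (Fin (N + 2) → S)) (hWmeas : MeasurableSet W)
    (hW1 : 0 < ψ ((fun w => w 0) '' W))
    (hWpos : ∀ z ∈ (fun w => w 0) '' W,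
      0 < Pz z {ω | (fun i : Fin (N + 2) => ω (i : ℕ)) ∈ W}) :
    ∀ z : S,
      Pz z {ω | ∀ M : ℕ, ∃ l : ℕ, M ≤ l ∧ (fun i : Fin (N + 2) => ω (l + (i : ℕ))) ∈ W} = 1 :=
  harris_visits_W_infinitely_often_general κ Pz ψ hFam hHarris W hWmeas hW1 hWpos

end PMMPaper
end
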